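/- Let K be a field of characteristic zero, F a nonzero homogeneous form of degree d in the dual ring R = K[X_1,...,X_n], A = S/Ann_S(F), and ℓ ∈ S a linear form. For every 0 ≤ i ≤ d with ℓ^i ∘ F ≠ 0, the K-dimension of the artinian Gorenstein algebra A^{(i)}_ℓ := S/Ann_S(ℓ^i ∘ F) equals the rank of the multiplication map ×ℓ^i : A → A. -/

import Mathlib

/-!
Macaulay inverse systems: the polynomial ring `S = K[x_1,...,x_n]` acts on its dual copy
`R = K[X_1,...,X_n]` (realized as the same type `MvPolynomial σ K`) by differentiation,
`x_i` acting as `∂/∂X_i`.  For a form `F`, `ann F` is the annihilator ideal and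
`AG F = S / ann F` is the associated graded artinian Gorenstein algebra.
-/

open MvPolynomial

namespace InverseSystem

variable {K : Type*} [Field K] {σ : Type*}

theorem pderiv_pderiv_comm (i j : σ) (p : MvPolynomial σ K) :
    pderiv i (pderiv j p) = pderiv j (pderiv i p) := by
  classical
  induction p using MvPolynomial.induction_on' with
  | monomial m c =>
    rcases eq_or_ne i j with rfl | hij
    · rfl
    · have he : m - Finsupp.single j 1 - Finsupp.single i 1
          = m - Finsupp.single i 1 - Finsupp.single j 1 := tsub_right_comm
      have h1 : ((m - Finsupp.single j 1) : σ →₀ ℕ) i = m i := by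
        rw [Finsupp.tsub_apply, Finsupp.single_apply, if_neg hij.symm, Nat.sub_zero]
      have h2 : ((m - Finsupp.single i 1) : σ →₀ ℕ) j = m j := by
        rw [Finsupp.tsub_apply, Finsupp.single_apply, if_neg hij, Nat.sub_zero]
      simp only [pderiv_monomial, h1, h2, he]
      ring_nf
  | add p q hp hq => simp [hp, hq]

/-- The set of partial-derivative operators `∂/∂X_i`, as `K`-linear endomorphisms. -/
def pderivSet (K : Type*) [Field K] (σ : Type*) :
    Set (Module.End K (MvPolynomial σ K)) :=
  Set.range fun i : σ => (pderiv i).toLinearMap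

theorem pderivSet_comm :
    ∀ a ∈ pderivSet K σ, ∀ b ∈ pderivSet K σ, a * b = b * a := by
  rintro - ⟨i, rfl⟩ - ⟨j, rfl⟩
  exact LinearMap.ext fun p => pderiv_pderiv_comm (K := K) i j p

/-- The action of the polynomial ring on its dual copy by differentiation, as an algebra
homomorphism into endomorphisms: the variable `x_i` acts as `∂/∂X_i`. -/
noncomputable def diffAlgHom (K : Type*) [Field K] (σ : Type*) :
    MvPolynomial σ K →ₐ[K] Module.End K (MvPolynomial σ K) :=
  letI : CommSemiring (Algebra.adjoin K (pderivSet K σ)) :=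
    Algebra.adjoinCommSemiringOfComm K pderivSet_comm
  ((Algebra.adjoin K (pderivSet K σ)).val).comp
    (aeval fun i : σ =>
      (⟨(pderiv i).toLinearMap, Algebra.subset_adjoin ⟨i, rfl⟩⟩ :
        Algebra.adjoin K (pderivSet K σ)))

/-- `diffOp g F` is `g ∘ F`, the differential operator associated to `g` applied to `F`. -/
noncomputable def diffOp (g F : MvPolynomial σ K) : MvPolynomial σ K :=
  diffAlgHom K σ g F

/-- The annihilator `Ann_S(F) = {g ∈ S : g ∘ F = 0}` of Macaulay's inverse systems. -/
noncomputable def ann (F : MvPolynomial σ K) : Ideal (MvPolynomial σ K) where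
  carrier := {g | diffOp g F = 0}
  zero_mem' := by simp [diffOp]
  add_mem' := by
    intro a b ha hb
    simp only [Set.mem_setOf_eq, diffOp, map_add, LinearMap.add_apply] at *
    rw [ha, hb, add_zero]
  smul_mem' := by
    intro c g hg
    simp only [Set.mem_setOf_eq, diffOp, smul_eq_mul, map_mul, Module.End.mul_apply] at *
    rw [hg, map_zero]

/-- The artinian Gorenstein algebra `A = S/Ann_S(F)` with Macaulay dual generator `F`. -/
noncomputable abbrev AG (F : MvPolynomial σ K) := MvPolynomial σ K ⧸ ann F

/-- The degree-`i` graded component `A_i` of `A = S/Ann_S(F)`: the image of the space of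
homogeneous polynomials of degree `i`. -/
noncomputable def gradedPiece (F : MvPolynomial σ K) (i : ℕ) : Submodule K (AG F) :=
  Submodule.map (Ideal.Quotient.mkₐ K (ann F)).toLinearMap (homogeneousSubmodule σ K i)

/-- The Hilbert function `h_A(i) = dim_K A_i` of `A = S/Ann_S(F)`. -/
noncomputable def hilbert (F : MvPolynomial σ K) (i : ℕ) : ℕ :=
  Module.finrank K (gradedPiece F i)

/-- Multiplication by (the class of) `g` on `A = S/Ann_S(F)`, as a `K`-linear endomorphism. -/
noncomputable def mulMap (F g : MvPolynomial σ K) : Module.End K (AG F) :=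
  LinearMap.mulLeft K (Ideal.Quotient.mk (ann F) g)

/-- The rank of multiplication by `g`, as a map `A → A`, for `A = S/Ann_S(F)`. -/
noncomputable def rankMul (F g : MvPolynomial σ K) : ℕ :=
  Module.finrank K (LinearMap.range (mulMap F g))

/-- The rank of multiplication by `g` restricted to the graded piece `A_i`; for `g`
homogeneous of degree `j - i` this is the rank of `×g : A_i → A_j` (the image lies in `A_j`). -/
noncomputable def rankMulGraded (F g : MvPolynomial σ K) (i : ℕ) : ℕ :=
  Module.finrank K (Submodule.map (mulMap F g) (gradedPiece F i))

/-- `p` is the Jordan type (the partition recording Jordan block sizes) of the endomorphism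
`f` of `V`: for every `k`, `dim_K ker (f^k) = Σ_{b ∈ p} min k b`.  (For a single nilpotent
Jordan block of size `b` one has `dim ker (f^k) = min k b`.) -/
def IsJordanTypeOf {V : Type*} [AddCommGroup V] [Module K V]
    (f : Module.End K V) (p : Multiset ℕ) : Prop :=
  ∀ k : ℕ, (p.map fun b => min k b).sum = Module.finrank K (LinearMap.ker (f ^ k))

end InverseSystem

open InverseSystem

theorem Ideal.finrank_quotient_colon_singleton {K S : Type*} [Field K] [CommRing S] [Algebra K S]
    (I : Ideal S) (a : S) :
    Module.finrank K (S ⧸ I.colon {a}) =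
      Module.finrank K (LinearMap.range (LinearMap.mulLeft K (Ideal.Quotient.mk I a))) := by
  set φ := LinearMap.mulLeft K (Ideal.Quotient.mk I a) ∘ₗ (Ideal.Quotient.mkₐ K I).toLinearMap
  have hker : LinearMap.ker φ = (I.colon {a}).restrictScalars K := by
    ext g
    rw [LinearMap.mem_ker, Submodule.restrictScalars_mem, Submodule.mem_colon_singleton,
      smul_eq_mul, mul_comm, ← Ideal.Quotient.eq_zero_iff_mem, map_mul]
    rfl
  have hrange :
      LinearMap.range φ = LinearMap.range (LinearMap.mulLeft K (Ideal.Quotient.mk I a)) :=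
    LinearMap.range_comp_of_range_eq_top _ (LinearMap.range_eq_top.2 Ideal.Quotient.mk_surjective)
  rw [← hrange, ← φ.quotKerEquivRange.finrank_eq, hker,
    (Submodule.Quotient.restrictScalarsEquiv K (I.colon {a})).finrank_eq]

namespace InverseSystem

variable {K : Type*} [Field K] {σ : Type*}

theorem diffOp_mul (g h F : MvPolynomial σ K) :
    diffOp (g * h) F = diffOp g (diffOp h F) := by
  simp only [diffOp, map_mul, Module.End.mul_apply]

theorem ann_diffOp (g F : MvPolynomial σ K) : ann (diffOp g F) = (ann F).colon {g} := by
  ext h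
  rw [Submodule.mem_colon_singleton, smul_eq_mul]
  show diffOp h (diffOp g F) = 0 ↔ diffOp (h * g) F = 0
  rw [diffOp_mul]

end InverseSystem

theorem stmt_3_general {K : Type*} [Field K] (n : ℕ) (F : MvPolynomial (Fin n) K)
    (l : MvPolynomial (Fin n) K) (i : ℕ) :
    Module.finrank K (AG (diffOp (l ^ i) F)) = rankMul F (l ^ i) := by
  unfold AG
  rw [ann_diffOp]
  exact Ideal.finrank_quotient_colon_singleton (ann F) (l ^ i)

/-- For `0 ≤ i ≤ d` with `ℓ^i ∘ F ≠ 0`, the dimension of `A^{(i)}_ℓ = S/Ann(ℓ^i ∘ F)`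
equals the rank of `×ℓ^i : A → A` on `A = S/Ann(F)`. -/
theorem stmt_3 {K : Type*} [Field K] [CharZero K] (n d : ℕ)
    (F : MvPolynomial (Fin n) K) (hF0 : F ≠ 0) (hF : F.IsHomogeneous d)
    (l : MvPolynomial (Fin n) K) (hl : l.IsHomogeneous 1)
    (i : ℕ) (hi : i ≤ d) (hne : diffOp (l ^ i) F ≠ 0) :
    Module.finrank K (AG (diffOp (l ^ i) F)) = rankMul F (l ^ i) :=
  stmt_3_general n F l i
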